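/- (Theorem 1, forward direction, pathwise form.) Suppose the sequences η, y, ε, ξ satisfy the within-level equations for every t ∈ ℤ. Define the augmented state η̃_t ∈ ℝ^{L·V + L·U} by stacking (η_t, η_{t−1}, …, η_{t−L+1}, y_t, y_{t−1}, …, y_{t−L+1}). Then for every t ∈ ℤ: (i) y_t = Z η̃_t, where Z = [0_{U×L·V} | I_U | 0_{U×(L−1)·U}] extracts the contemporaneous observation block; and (ii) η̃_{t+1} = T_t η̃_t + c_t + w_t, where T_t, c_t, w_t are the explicitly constructed block transition matrix, intercept vector, and noise vector given in the context. -/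
import Mathlib

open Matrix

lemma strict_lower_inv {n : ℕ} (S : Matrix (Fin n) (Fin n) ℝ)
    (h : ∀ i j : Fin n, i ≤ j → S i j = 0) :
    (1 - S)⁻¹ * (1 - S) = 1 ∧ (1 - S) * (1 - S)⁻¹ = 1 := by
  have hdet : (1 - S).det = 1 := by
    have htri : (1 - S).BlockTriangular OrderDual.toDual := by
      intro i j hij
      have : i < j := hij
      simp [Matrix.sub_apply, Matrix.one_apply, this.ne, h i j this.le]
    rw [Matrix.det_of_lowerTriangular _ htri]
    have : ∀ i : Fin n, (1 - S) i i = 1 := by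
      intro i; simp [Matrix.sub_apply, Matrix.one_apply, h i i le_rfl]
    simp [this]
  have hu : IsUnit (1 - S).det := by simp [hdet]
  exact ⟨Matrix.nonsing_inv_mul _ hu, Matrix.mul_nonsing_inv _ hu⟩

lemma unit_inv_mul {n : ℕ} (S : Matrix (Fin n) (Fin n) ℝ) (h : IsUnit S) :
    S⁻¹ * S = 1 :=
  Matrix.nonsing_inv_mul _ ((Matrix.isUnit_iff_isUnit_det S).mp h)

lemma mulVec_sum' {m n : Type*} [Fintype n] {k : ℕ} (M : Matrix m n ℝ)
    (v : Fin k → n → ℝ) : M.mulVec (∑ i, v i) = ∑ i, M.mulVec (v i) := by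
  funext j
  simp [Matrix.mulVec, dotProduct, Finset.mul_sum, Finset.sum_apply]
  rw [Finset.sum_comm]




/-- Index type for the augmented state vector of the state space reformulation:
`L` lagged latent-variable blocks of size `V` followed by `L` lagged observation
blocks of size `U`. -/
abbrev StateIdx (L V U : ℕ) := Fin L × Fin V ⊕ Fin L × Fin U

/-- **Theorem 1 (forward direction, pathwise form).** If the sequences `η, y, ε, ξ`
satisfy the within-level DSEM equations for every `t : ℤ`, then the augmented state
`η̃_t = (η_t, …, η_{t-L+1}, y_t, …, y_{t-L+1})` satisfies the linear Gaussian state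
space recursions `y_t = Z η̃_t` and `η̃_{t+1} = T_t η̃_t + c_t + w_t`, with the
explicitly constructed block measurement matrix `Z`, transition matrix `T_t`,
intercept `c_t`, and noise `w_t`. -/
theorem dsem_within_to_state_space (U V p L : ℕ)
    (hU : 0 < U) (hV : 0 < V) (hp : 0 < p) (hL : 1 ≤ L)
    (ν : ℤ → Fin U → ℝ) (α : ℤ → Fin V → ℝ) (X : ℤ → Fin p → ℝ)
    (K : ℤ → Matrix (Fin U) (Fin p) ℝ) (Γ : ℤ → Matrix (Fin V) (Fin p) ℝ)
    (Λ : Fin (L + 1) → ℤ → Matrix (Fin U) (Fin V) ℝ)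
    (R : Fin (L + 1) → ℤ → Matrix (Fin U) (Fin U) ℝ)
    (B : Fin (L + 1) → ℤ → Matrix (Fin V) (Fin V) ℝ)
    (Q : Fin (L + 1) → ℤ → Matrix (Fin V) (Fin U) ℝ)
    (hR0 : ∀ (t : ℤ) (i j : Fin U), i ≤ j → R 0 t i j = 0)
    (hB0 : ∀ (t : ℤ) (i j : Fin V), i ≤ j → B 0 t i j = 0)
    (ε : ℤ → Fin U → ℝ) (ξ : ℤ → Fin V → ℝ)
    (A : ℤ → Matrix (Fin U) (Fin U) ℝ) (hA : ∀ t, A t = (1 - R 0 t)⁻¹)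
    (Ξ : ℤ → Matrix (Fin V) (Fin V) ℝ) (hΞ : ∀ t, Ξ t = (1 - B 0 t)⁻¹)
    (hMinv : ∀ t, IsUnit (1 - Ξ t * Q 0 t * A t * Λ 0 t))
    (hNinv : ∀ t, IsUnit (1 - A t * Λ 0 t * Ξ t * Q 0 t))
    (M : ℤ → Matrix (Fin V) (Fin V) ℝ)
    (hM : ∀ t, M t = (1 - Ξ t * Q 0 t * A t * Λ 0 t)⁻¹ * Ξ t)
    (N : ℤ → Matrix (Fin U) (Fin U) ℝ)
    (hN : ∀ t, N t = (1 - A t * Λ 0 t * Ξ t * Q 0 t)⁻¹ * A t)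
    (η : ℤ → Fin V → ℝ) (y : ℤ → Fin U → ℝ)
    -- the within-level equations hold at every timepoint
    (heqy : ∀ t : ℤ, y t = ν t +
        (∑ l : Fin (L + 1), (Λ l t).mulVec (η (t - (l.val : ℤ)))) +
        (∑ l : Fin (L + 1), (R l t).mulVec (y (t - (l.val : ℤ)))) +
        (K t).mulVec (X t) + ε t)
    (heqη : ∀ t : ℤ, η t = α t +
        (∑ l : Fin (L + 1), (B l t).mulVec (η (t - (l.val : ℤ)))) +
        (∑ l : Fin (L + 1), (Q l t).mulVec (y (t - (l.val : ℤ)))) +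
        (Γ t).mulVec (X t) + ξ t)
    -- the augmented state vector, stacking η_t, …, η_{t-L+1}, y_t, …, y_{t-L+1}
    (ηtil : ℤ → StateIdx L V U → ℝ)
    (hηtil : ∀ t : ℤ, ηtil t =
      Sum.elim (fun ki : Fin L × Fin V => η (t - (ki.1.val : ℤ)) ki.2)
               (fun kj : Fin L × Fin U => y (t - (kj.1.val : ℤ)) kj.2))
    -- the measurement matrix Z = [0 | I_U | 0] extracting the contemporaneous y-block
    (Z : Matrix (Fin U) (StateIdx L V U) ℝ)
    (hZ : ∀ (i : Fin U) (c : StateIdx L V U), Z i c =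
      Sum.elim (fun _ : Fin L × Fin V => (0 : ℝ))
               (fun kj : Fin L × Fin U => if kj.1.val = 0 ∧ kj.2 = i then 1 else 0) c)
    -- the block transition matrix T_t
    (T : ℤ → Matrix (StateIdx L V U) (StateIdx L V U) ℝ)
    (hT11 : ∀ (t : ℤ) (k : Fin L) (i : Fin V) (k' : Fin L) (i' : Fin V),
      T t (Sum.inl (k, i)) (Sum.inl (k', i')) =
        if k.val = 0 then
          (M (t + 1) * (B k'.succ (t + 1) + Q 0 (t + 1) * A (t + 1) * Λ k'.succ (t + 1))) i i'
        else if (k'.val + 1 = k.val ∧ i' = i) then 1 else 0)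
    (hT12 : ∀ (t : ℤ) (k : Fin L) (i : Fin V) (k' : Fin L) (j' : Fin U),
      T t (Sum.inl (k, i)) (Sum.inr (k', j')) =
        if k.val = 0 then
          (M (t + 1) * (Q k'.succ (t + 1) + Q 0 (t + 1) * A (t + 1) * R k'.succ (t + 1))) i j'
        else 0)
    (hT31 : ∀ (t : ℤ) (k : Fin L) (j : Fin U) (k' : Fin L) (i' : Fin V),
      T t (Sum.inr (k, j)) (Sum.inl (k', i')) =
        if k.val = 0 then
          (N (t + 1) * (Λ k'.succ (t + 1) + Λ 0 (t + 1) * Ξ (t + 1) * B k'.succ (t + 1))) j i'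
        else 0)
    (hT32 : ∀ (t : ℤ) (k : Fin L) (j : Fin U) (k' : Fin L) (j' : Fin U),
      T t (Sum.inr (k, j)) (Sum.inr (k', j')) =
        if k.val = 0 then
          (N (t + 1) * (R k'.succ (t + 1) + Λ 0 (t + 1) * Ξ (t + 1) * Q k'.succ (t + 1))) j j'
        else if (k'.val + 1 = k.val ∧ j' = j) then 1 else 0)
    -- the intercept vector c_t
    (cvec : ℤ → StateIdx L V U → ℝ)
    (hcvec1 : ∀ (t : ℤ) (k : Fin L) (i : Fin V),
      cvec t (Sum.inl (k, i)) =
        if k.val = 0 then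
          (M (t + 1)).mulVec (α (t + 1) + (Γ (t + 1)).mulVec (X (t + 1)) +
            (Q 0 (t + 1) * A (t + 1)).mulVec
              (ν (t + 1) + (K (t + 1)).mulVec (X (t + 1)))) i
        else 0)
    (hcvec3 : ∀ (t : ℤ) (k : Fin L) (j : Fin U),
      cvec t (Sum.inr (k, j)) =
        if k.val = 0 then
          (N (t + 1)).mulVec (ν (t + 1) + (K (t + 1)).mulVec (X (t + 1)) +
            (Λ 0 (t + 1) * Ξ (t + 1)).mulVec
              (α (t + 1) + (Γ (t + 1)).mulVec (X (t + 1)))) j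
        else 0)
    -- the noise vector w_t
    (w : ℤ → StateIdx L V U → ℝ)
    (hw1 : ∀ (t : ℤ) (k : Fin L) (i : Fin V),
      w t (Sum.inl (k, i)) =
        if k.val = 0 then
          (M (t + 1)).mulVec (ξ (t + 1) +
            (Q 0 (t + 1) * A (t + 1)).mulVec (ε (t + 1))) i
        else 0)
    (hw3 : ∀ (t : ℤ) (k : Fin L) (j : Fin U),
      w t (Sum.inr (k, j)) =
        if k.val = 0 then
          (N (t + 1)).mulVec (ε (t + 1) +
            (Λ 0 (t + 1) * Ξ (t + 1)).mulVec (ξ (t + 1))) j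
        else 0) :
    ∀ t : ℤ,
      y t = Z.mulVec (ηtil t) ∧
      ηtil (t + 1) = (T t).mulVec (ηtil t) + cvec t + w t := by
  intro t
  -- invertibility facts
  have hA1 : A (t+1) * (1 - R 0 (t+1)) = 1 := by
    rw [hA]; exact (strict_lower_inv _ (hR0 (t+1))).1
  have hΞ1 : Ξ (t+1) * (1 - B 0 (t+1)) = 1 := by
    rw [hΞ]; exact (strict_lower_inv _ (hB0 (t+1))).1
  have hMu := unit_inv_mul _ (hMinv (t+1))
  have hNu := unit_inv_mul _ (hNinv (t+1))
  -- abbreviate the exogenous parts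
  obtain ⟨UY, hUY⟩ : ∃ v : Fin U → ℝ, v =
      ν (t+1) + (∑ k : Fin L, (Λ k.succ (t+1)).mulVec (η (t - (k.val:ℤ))))
      + (∑ k : Fin L, (R k.succ (t+1)).mulVec (y (t - (k.val:ℤ))))
      + (K (t+1)).mulVec (X (t+1)) + ε (t+1) := ⟨_, rfl⟩
  obtain ⟨UH, hUH⟩ : ∃ v : Fin V → ℝ, v =
      α (t+1) + (∑ k : Fin L, (B k.succ (t+1)).mulVec (η (t - (k.val:ℤ))))
      + (∑ k : Fin L, (Q k.succ (t+1)).mulVec (y (t - (k.val:ℤ))))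
      + (Γ (t+1)).mulVec (X (t+1)) + ξ (t+1) := ⟨_, rfl⟩
  have harg : ∀ k : Fin L, (t + 1 : ℤ) - (((k.succ : Fin (L+1)).val : ℕ) : ℤ)
      = t - (k.val : ℤ) := by
    intro k; push_cast [Fin.val_succ]; ring
  have hy0 : y (t+1) - (R 0 (t+1)).mulVec (y (t+1))
      = (Λ 0 (t+1)).mulVec (η (t+1)) + UY := by
    have h := heqy (t+1)
    rw [Fin.sum_univ_succ, Fin.sum_univ_succ] at h
    simp only [Fin.val_zero, Nat.cast_zero, sub_zero, harg] at h
    rw [hUY]; linear_combination h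
  have hη0 : η (t+1) - (B 0 (t+1)).mulVec (η (t+1))
      = (Q 0 (t+1)).mulVec (y (t+1)) + UH := by
    have h := heqη (t+1)
    rw [Fin.sum_univ_succ, Fin.sum_univ_succ] at h
    simp only [Fin.val_zero, Nat.cast_zero, sub_zero, harg] at h
    rw [hUH]; linear_combination h
  have hy : y (t+1) = (A (t+1)).mulVec ((Λ 0 (t+1)).mulVec (η (t+1)) + UY) := by
    calc y (t+1) = (A (t+1) * (1 - R 0 (t+1))).mulVec (y (t+1)) := by
          rw [hA1, Matrix.one_mulVec]
      _ = (A (t+1)).mulVec ((1 - R 0 (t+1)).mulVec (y (t+1))) := by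
          rw [Matrix.mulVec_mulVec]
      _ = _ := by rw [Matrix.sub_mulVec, Matrix.one_mulVec, hy0]
  have hη : η (t+1) = (Ξ (t+1)).mulVec ((Q 0 (t+1)).mulVec (y (t+1)) + UH) := by
    calc η (t+1) = (Ξ (t+1) * (1 - B 0 (t+1))).mulVec (η (t+1)) := by
          rw [hΞ1, Matrix.one_mulVec]
      _ = (Ξ (t+1)).mulVec ((1 - B 0 (t+1)).mulVec (η (t+1))) := by
          rw [Matrix.mulVec_mulVec]
      _ = _ := by rw [Matrix.sub_mulVec, Matrix.one_mulVec, hη0]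
  -- the key solved equations
  have hkeyη : η (t+1) = (M (t+1)).mulVec UH
      + (M (t+1) * (Q 0 (t+1) * A (t+1))).mulVec UY := by
    have hη2 := hη
    rw [hy] at hη2
    simp only [Matrix.mulVec_add, Matrix.mulVec_mulVec] at hη2
    have e2 : (1 - Ξ (t+1) * (Q 0 (t+1) * (A (t+1) * Λ 0 (t+1)))).mulVec (η (t+1))
        = (Ξ (t+1) * (Q 0 (t+1) * A (t+1))).mulVec UY + (Ξ (t+1)).mulVec UH := by
      rw [Matrix.sub_mulVec, Matrix.one_mulVec]
      linear_combination hη2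
    have hMu' : (1 - Ξ (t+1) * (Q 0 (t+1) * (A (t+1) * Λ 0 (t+1))))⁻¹
        * (1 - Ξ (t+1) * (Q 0 (t+1) * (A (t+1) * Λ 0 (t+1)))) = 1 := by
      simpa [Matrix.mul_assoc] using hMu
    have hM' : M (t+1) = (1 - Ξ (t+1) * (Q 0 (t+1) * (A (t+1) * Λ 0 (t+1))))⁻¹ * Ξ (t+1) := by
      simp only [hM, Matrix.mul_assoc]
    calc η (t+1)
        = ((1 - Ξ (t+1) * (Q 0 (t+1) * (A (t+1) * Λ 0 (t+1))))⁻¹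
            * (1 - Ξ (t+1) * (Q 0 (t+1) * (A (t+1) * Λ 0 (t+1)))) ).mulVec (η (t+1)) := by
          rw [hMu', Matrix.one_mulVec]
      _ = ((1 - Ξ (t+1) * (Q 0 (t+1) * (A (t+1) * Λ 0 (t+1))))⁻¹).mulVec
            ((1 - Ξ (t+1) * (Q 0 (t+1) * (A (t+1) * Λ 0 (t+1)))).mulVec (η (t+1))) := by
          rw [Matrix.mulVec_mulVec]
      _ = _ := by
          rw [e2]
          simp only [Matrix.mulVec_add, Matrix.mulVec_mulVec, hM', Matrix.mul_assoc]
          abel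
  have hkeyy : y (t+1) = (N (t+1)).mulVec UY
      + (N (t+1) * (Λ 0 (t+1) * Ξ (t+1))).mulVec UH := by
    have hy2 := hy
    rw [hη] at hy2
    simp only [Matrix.mulVec_add, Matrix.mulVec_mulVec] at hy2
    have e2 : (1 - A (t+1) * (Λ 0 (t+1) * (Ξ (t+1) * Q 0 (t+1)))).mulVec (y (t+1))
        = (A (t+1) * (Λ 0 (t+1) * Ξ (t+1))).mulVec UH + (A (t+1)).mulVec UY := by
      rw [Matrix.sub_mulVec, Matrix.one_mulVec]
      linear_combination hy2
    have hNu' : (1 - A (t+1) * (Λ 0 (t+1) * (Ξ (t+1) * Q 0 (t+1))))⁻¹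
        * (1 - A (t+1) * (Λ 0 (t+1) * (Ξ (t+1) * Q 0 (t+1)))) = 1 := by
      simpa [Matrix.mul_assoc] using hNu
    have hN' : N (t+1) = (1 - A (t+1) * (Λ 0 (t+1) * (Ξ (t+1) * Q 0 (t+1))))⁻¹ * A (t+1) := by
      simp only [hN, Matrix.mul_assoc]
    calc y (t+1)
        = ((1 - A (t+1) * (Λ 0 (t+1) * (Ξ (t+1) * Q 0 (t+1))))⁻¹
            * (1 - A (t+1) * (Λ 0 (t+1) * (Ξ (t+1) * Q 0 (t+1)))) ).mulVec (y (t+1)) := by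
          rw [hNu', Matrix.one_mulVec]
      _ = ((1 - A (t+1) * (Λ 0 (t+1) * (Ξ (t+1) * Q 0 (t+1))))⁻¹).mulVec
            ((1 - A (t+1) * (Λ 0 (t+1) * (Ξ (t+1) * Q 0 (t+1)))).mulVec (y (t+1))) := by
          rw [Matrix.mulVec_mulVec]
      _ = _ := by
          rw [e2]
          simp only [Matrix.mulVec_add, Matrix.mulVec_mulVec, hN', Matrix.mul_assoc]
          abel
  -- expanded forms
  have hηexp : η (t+1) =
      (M (t+1)).mulVec (α (t+1) + (Γ (t+1)).mulVec (X (t+1))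
        + (Q 0 (t+1) * A (t+1)).mulVec (ν (t+1) + (K (t+1)).mulVec (X (t+1))))
      + (M (t+1)).mulVec (ξ (t+1) + (Q 0 (t+1) * A (t+1)).mulVec (ε (t+1)))
      + (∑ k : Fin L, (M (t+1) * (B k.succ (t+1) + Q 0 (t+1) * A (t+1) * Λ k.succ (t+1))).mulVec (η (t - (k.val:ℤ))))
      + (∑ k : Fin L, (M (t+1) * (Q k.succ (t+1) + Q 0 (t+1) * A (t+1) * R k.succ (t+1))).mulVec (y (t - (k.val:ℤ)))) := by
    rw [hkeyη, hUY, hUH]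
    simp only [Matrix.mulVec_add, Matrix.mul_add, Matrix.add_mulVec, Matrix.mulVec_mulVec,
      mulVec_sum', Finset.sum_add_distrib, Matrix.mul_assoc]
    abel
  have hyexp : y (t+1) =
      (N (t+1)).mulVec (ν (t+1) + (K (t+1)).mulVec (X (t+1))
        + (Λ 0 (t+1) * Ξ (t+1)).mulVec (α (t+1) + (Γ (t+1)).mulVec (X (t+1))))
      + (N (t+1)).mulVec (ε (t+1) + (Λ 0 (t+1) * Ξ (t+1)).mulVec (ξ (t+1)))
      + (∑ k : Fin L, (N (t+1) * (Λ k.succ (t+1) + Λ 0 (t+1) * Ξ (t+1) * B k.succ (t+1))).mulVec (η (t - (k.val:ℤ))))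
      + (∑ k : Fin L, (N (t+1) * (R k.succ (t+1) + Λ 0 (t+1) * Ξ (t+1) * Q k.succ (t+1))).mulVec (y (t - (k.val:ℤ)))) := by
    rw [hkeyy, hUY, hUH]
    simp only [Matrix.mulVec_add, Matrix.mul_add, Matrix.add_mulVec, Matrix.mulVec_mulVec,
      mulVec_sum', Finset.sum_add_distrib, Matrix.mul_assoc]
    abel
  constructor
  · -- measurement equation
    funext i
    rw [hηtil]
    simp only [Matrix.mulVec, dotProduct, Fintype.sum_sum_type, hZ,
      Sum.elim_inl, Sum.elim_inr, zero_mul, Finset.sum_const_zero, zero_add]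
    rw [Finset.sum_eq_single ((⟨⟨0, hL⟩, i⟩ : Fin L × Fin U))]
    · simp
    · rintro ⟨k, j⟩ - hne
      by_cases hc : k.val = 0 ∧ j = i
      · exfalso; apply hne
        obtain ⟨h1, h2⟩ := hc
        subst h2
        exact Prod.ext (Fin.ext h1) rfl
      · simp [hc]
    · simp
  · -- transition equation
    funext x
    rw [hηtil (t+1)]
    cases x with
    | inl ki =>
      obtain ⟨k, i⟩ := ki
      simp only [Sum.elim_inl, Pi.add_apply, hcvec1, hw1, hηtil t, Matrix.mulVec,
        dotProduct, Fintype.sum_sum_type, Sum.elim_inl, Sum.elim_inr, hT11, hT12]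
      by_cases hk : k.val = 0
      · rw [show (t + 1 : ℤ) - ((k.val : ℕ) : ℤ) = t + 1 by rw [hk]; simp]
        rw [hηexp]
        simp only [hk, if_true, Fintype.sum_prod_type, Pi.add_apply, Finset.sum_apply,
          Matrix.mulVec, dotProduct]
        ring
      · simp only [hk, if_false, zero_mul, Finset.sum_const_zero, add_zero]
        have hk1 : k.val - 1 < L := by omega
        rw [Finset.sum_eq_single ((⟨⟨k.val - 1, hk1⟩, i⟩ : Fin L × Fin V))]
        · have hc2 : k.val - 1 + 1 = k.val := by omega
          have harg2 : (t : ℤ) - ((k.val - 1 : ℕ) : ℤ) = t + 1 - ((k.val : ℕ) : ℤ) := by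
            push_cast [Nat.cast_sub (by omega : 1 ≤ k.val)]
            ring
          simp [hc2, harg2]
        · rintro ⟨k', i'⟩ - hne
          have hnc : ¬(k'.val + 1 = k.val ∧ i' = i) := by
            rintro ⟨h1, h2⟩
            apply hne
            subst h2
            have hk' : k' = ⟨k.val - 1, hk1⟩ := Fin.ext (show k'.val = k.val - 1 by omega)
            rw [hk']
          simp [hnc]
        · simp
    | inr kj =>
      obtain ⟨k, j⟩ := kj
      simp only [Sum.elim_inr, Pi.add_apply, hcvec3, hw3, hηtil t, Matrix.mulVec,
        dotProduct, Fintype.sum_sum_type, Sum.elim_inl, Sum.elim_inr, hT31, hT32]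
      by_cases hk : k.val = 0
      · rw [show (t + 1 : ℤ) - ((k.val : ℕ) : ℤ) = t + 1 by rw [hk]; simp]
        rw [hyexp]
        simp only [hk, if_true, Fintype.sum_prod_type, Pi.add_apply, Finset.sum_apply,
          Matrix.mulVec, dotProduct]
        ring
      · simp only [hk, if_false, zero_mul, Finset.sum_const_zero, add_zero, zero_add]
        have hk1 : k.val - 1 < L := by omega
        rw [Finset.sum_eq_single ((⟨⟨k.val - 1, hk1⟩, j⟩ : Fin L × Fin U))]
        · have hc2 : k.val - 1 + 1 = k.val := by omega
          have harg2 : (t : ℤ) - ((k.val - 1 : ℕ) : ℤ) = t + 1 - ((k.val : ℕ) : ℤ) := by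
            push_cast [Nat.cast_sub (by omega : 1 ≤ k.val)]
            ring
          simp [hc2, harg2]
        · rintro ⟨k', j'⟩ - hne
          have hnc : ¬(k'.val + 1 = k.val ∧ j' = j) := by
            rintro ⟨h1, h2⟩
            apply hne
            subst h2
            have hk' : k' = ⟨k.val - 1, hk1⟩ := Fin.ext (show k'.val = k.val - 1 by omega)
            rw [hk']
          simp [hnc]
        · simp
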